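/- Hard-thresholding spectral error bound under sparsity: let Σ_u = (σ_{ij}) be symmetric with sparsity m_p = max_i Σ_j |σ_{ij}|^q for some q ∈ [0,1), and suppose Σ̂_u^D = (σ̂_{ij}^D) is symmetric and satisfies, for every (i,j): |σ̂_{ij}^D − σ_{ij}| ≤ 2ω when σ̂_{ij}^D ≠ 0 or |σ_{ij}| > ω, and σ̂_{ij}^D = 0 implies |σ̂_{ij}^D − σ_{ij}| = |σ_{ij}| ≤ min(|σ_{ij}|, ω·1{|σ_{ij}| ≤ ω} + |σ_{ij}|). If |σ̂_{ij}^D − σ_{ij}| ≤ 2ω·1{|σ_{ij}| ≥ ω/2} + |σ_{ij}|·1{|σ_{ij}| < ω/2} for all i,j, then ‖Σ̂_u^D − Σ_u‖₂ ≤ ‖Σ̂_u^D − Σ_u‖_∞ ≤ (2^{1+q} + 1) m_p ω^{1−q}. -/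

import Mathlib

open Matrix BigOperators

noncomputable def frobNorm {m n : Type*} [Fintype m] [Fintype n] (A : Matrix m n ℝ) : ℝ :=
  Real.sqrt (∑ i, ∑ j, (A i j) ^ 2)

noncomputable def maxNorm {m n : Type*} [Fintype m] [Fintype n] (A : Matrix m n ℝ) : ℝ :=
  ⨆ i, ⨆ j, |A i j|

noncomputable def opNorm {n : Type*} [Fintype n] [DecidableEq n] (A : Matrix n n ℝ) : ℝ :=
  ‖Matrix.toEuclideanCLM (𝕜 := ℝ) A‖

/-! The spectral norm of a square matrix is at most `√(‖A‖₁ ‖A‖_∞)` (Schur test: Cauchy–Schwarz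
with weights `|a_ij|` in each row, then sum over columns), and for a symmetric matrix the maximal
row and column sums agree.

For the row sums, each entry error is at most `(2^{1+q} + 1) |σ_ij|^q ω^{1-q}`: if `|σ_ij| ≥ ω/2`,
then `2ω = 2 ω^q ω^{1-q} ≤ 2 (2|σ_ij|)^q ω^{1-q}`, and otherwise
`|σ_ij| = |σ_ij|^q |σ_ij|^{1-q} ≤ |σ_ij|^q ω^{1-q}`; then sum over `j`. -/

open Finset

theorem norm_toEuclideanCLM_le_sqrt_iSup_mul_iSup {n : Type*} [Fintype n] [DecidableEq n]
    (A : Matrix n n ℝ) :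
    ‖toEuclideanCLM (𝕜 := ℝ) A‖ ≤ √((⨆ i, ∑ j, |A i j|) * ⨆ j, ∑ i, |A i j|) := by
  set R := ⨆ i, ∑ j, |A i j|
  set C := ⨆ j, ∑ i, |A i j|
  have hR : ∀ i, ∑ j, |A i j| ≤ R := le_ciSup (Finite.bddAbove_range _)
  have hC : ∀ j, ∑ i, |A i j| ≤ C := le_ciSup (Finite.bddAbove_range _)
  have hR0 : 0 ≤ R := Real.iSup_nonneg fun i => sum_nonneg fun j _ => abs_nonneg _
  have weighted_cauchySchwarz (i : n) (x : n → ℝ) :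
      (∑ j, A i j * x j) ^ 2 ≤ (∑ j, |A i j|) * ∑ j, |A i j| * x j ^ 2 :=
    sum_sq_le_sum_mul_sum_of_sq_le_mul _ (fun _ _ => abs_nonneg _) (fun _ _ => by positivity)
      fun j _ => by rw [← mul_assoc, abs_mul_abs_self, mul_pow, sq]
  refine ContinuousLinearMap.opNorm_le_bound _ (Real.sqrt_nonneg _) fun x => ?_
  have key : ‖toEuclideanCLM (𝕜 := ℝ) A x‖ ^ 2 ≤ R * C * ‖x‖ ^ 2 := by
    rw [EuclideanSpace.real_norm_sq_eq, EuclideanSpace.real_norm_sq_eq, mul_sum]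
    calc ∑ i, (toEuclideanCLM (𝕜 := ℝ) A x i) ^ 2 = ∑ i, (∑ j, A i j * x j) ^ 2 := rfl
      _ ≤ ∑ i, (∑ j, |A i j|) * ∑ j, |A i j| * x j ^ 2 := by
        gcongr with i; exact weighted_cauchySchwarz i x
      _ ≤ ∑ i, R * ∑ j, |A i j| * x j ^ 2 := by gcongr with i; exact hR i
      _ = R * ∑ j, (∑ i, |A i j|) * x j ^ 2 := by
        rw [← mul_sum, sum_comm]; simp_rw [sum_mul]
      _ ≤ R * ∑ j, C * x j ^ 2 := by gcongr with j; exact hC j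
      _ = ∑ j, R * C * x j ^ 2 := by rw [mul_sum]; simp_rw [mul_assoc]
  calc ‖toEuclideanCLM (𝕜 := ℝ) A x‖ = √(‖toEuclideanCLM (𝕜 := ℝ) A x‖ ^ 2) :=
        (Real.sqrt_sq (norm_nonneg _)).symm
    _ ≤ √(R * C * ‖x‖ ^ 2) := Real.sqrt_le_sqrt key
    _ = √(R * C) * ‖x‖ := by rw [Real.sqrt_mul' _ (sq_nonneg _), Real.sqrt_sq (norm_nonneg _)]

theorem Matrix.IsSymm.opNorm_le_iSup_sum_abs {n : Type*} [Fintype n] [DecidableEq n]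
    {A : Matrix n n ℝ} (hA : A.IsSymm) : opNorm A ≤ ⨆ i, ∑ j, |A i j| := by
  have hcol : (⨆ j, ∑ i, |A i j|) = ⨆ i, ∑ j, |A i j| := by simp_rw [hA.apply]
  refine (norm_toEuclideanCLM_le_sqrt_iSup_mul_iSup A).trans_eq ?_
  rw [hcol]
  exact Real.sqrt_mul_self (Real.iSup_nonneg fun i => sum_nonneg fun j _ => abs_nonneg _)

theorem le_rpow_mul_rpow_one_sub {a ω q : ℝ} (ha : 0 ≤ a) (haω : a ≤ ω) (hq1 : q ≤ 1) :
    a ≤ a ^ q * ω ^ (1 - q) :=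
  calc a = a ^ q * a ^ (1 - q) := by
        rw [← Real.rpow_add' ha (by simp), add_sub_cancel, Real.rpow_one]
    _ ≤ a ^ q * ω ^ (1 - q) := by gcongr

theorem two_mul_le_rpow_mul_rpow_one_sub {a ω q : ℝ} (hω : 0 < ω) (haω : ω / 2 ≤ a)
    (hq0 : 0 ≤ q) : 2 * ω ≤ 2 ^ (1 + q) * a ^ q * ω ^ (1 - q) :=
  calc 2 * ω = 2 * ω ^ q * ω ^ (1 - q) := by
        rw [mul_assoc, ← Real.rpow_add hω, add_sub_cancel, Real.rpow_one]
    _ ≤ 2 * (2 * a) ^ q * ω ^ (1 - q) := by gcongr; linarith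
    _ = 2 ^ (1 + q) * a ^ q * ω ^ (1 - q) := by
        rw [Real.mul_rpow zero_le_two (by linarith), Real.rpow_add two_pos, Real.rpow_one]; ring

theorem le_sparsityBound_of_le_ite {s t ω q : ℝ} (hω : 0 < ω) (hq0 : 0 ≤ q) (hq1 : q ≤ 1)
    (ht : t ≤ if ω / 2 ≤ |s| then 2 * ω else |s|) :
    t ≤ (2 ^ (1 + q) + 1) * |s| ^ q * ω ^ (1 - q) := by
  split_ifs at ht with hs
  · calc t ≤ 2 * ω := ht
      _ ≤ 2 ^ (1 + q) * |s| ^ q * ω ^ (1 - q) := two_mul_le_rpow_mul_rpow_one_sub hω hs hq0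
      _ ≤ _ := by gcongr; linarith
  · calc t ≤ |s| := ht
      _ ≤ |s| ^ q * ω ^ (1 - q) :=
        le_rpow_mul_rpow_one_sub (abs_nonneg s) (by linarith [not_le.mp hs]) hq1
      _ ≤ _ := by
        rw [mul_assoc]
        exact le_mul_of_one_le_left (by positivity) (le_add_of_nonneg_left (by positivity))

/-- Hard-thresholding spectral error bound under sparsity: if `Σ` and `Σ̂ᴰ` are symmetric
and `|σ̂ᴰ_{ij} − σ_{ij}| ≤ 2ω·1{|σ_{ij}| ≥ ω/2} + |σ_{ij}|·1{|σ_{ij}| < ω/2}` for all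
`i, j`, then `‖Σ̂ᴰ − Σ‖₂ ≤ ‖Σ̂ᴰ − Σ‖_∞ ≤ (2^{1+q} + 1) m_p ω^{1−q}`, where
`m_p = max_i ∑_j |σ_{ij}|^q` and `q ∈ [0,1)`, `ω > 0`. -/
theorem stmt19 (p : ℕ) (q ω : ℝ) (hq0 : 0 ≤ q) (hq1 : q < 1) (hω : 0 < ω)
    (Sm D : Matrix (Fin p) (Fin p) ℝ) (hSm : Sm.IsSymm) (hD : D.IsSymm)
    (h : ∀ i j, |D i j - Sm i j| ≤ if ω / 2 ≤ |Sm i j| then 2 * ω else |Sm i j|) :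
    opNorm (D - Sm) ≤ (⨆ i, ∑ j, |D i j - Sm i j|) ∧
      (⨆ i, ∑ j, |D i j - Sm i j|) ≤
        ((2 : ℝ) ^ ((1 : ℝ) + q) + 1) * (⨆ i, ∑ j, |Sm i j| ^ q) * ω ^ ((1 : ℝ) - q) := by
  refine ⟨(hD.sub hSm).opNorm_le_iSup_sum_abs, ?_⟩
  have hK : (0 : ℝ) ≤ 2 ^ (1 + q) + 1 := by positivity
  have hw : 0 ≤ ω ^ (1 - q) := by positivity
  calc ⨆ i, ∑ j, |D i j - Sm i j|
      ≤ ⨆ i, (2 ^ (1 + q) + 1) * (∑ j, |Sm i j| ^ q) * ω ^ (1 - q) :=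
        ciSup_mono (Finite.bddAbove_range _) fun i => by
          rw [mul_sum, sum_mul]
          exact sum_le_sum fun j _ => le_sparsityBound_of_le_ite hω hq0 hq1.le (h i j)
    _ = (2 ^ (1 + q) + 1) * (⨆ i, ∑ j, |Sm i j| ^ q) * ω ^ (1 - q) := by
        rw [Real.mul_iSup_of_nonneg hK, Real.iSup_mul_of_nonneg hw]
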